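/- arXiv:2007.05049 — 6 statements merged into one kernel-verified Lean document; each statement's English description precedes it below -/
import Mathlib

section
/- Let X and Y be finite alphabets with |X| ≥ 2, let α ∈ (0,1), ε ∈ (0, 1 − 1/|X|], and fix x₀ ∈ X, y₀ ∈ Y. Define joint probability distributions q and p on X × Y by: q(x₀,y₀) = 1 and q(x,y) = 0 otherwise; p(x₀,y₀) = 1 − ε, p(x,y₀) = ε/(|X|−1) for x ≠ x₀, and p(x,y) = 0 for y ≠ y₀. Then TV(p,q) = ε, H_α(X|Y)_q = 0, and H_α(X|Y)_p = (1/(1−α)) · log₂( (1−ε)^α + (|X|−1)^{1−α} · ε^α ); in particular the continuity bound |H_α(X|Y)_p − H_α(X|Y)_q| ≤ (1/(1−α)) · log₂( (1−ε)^α + (|X|−1)^{1−α} · ε^α ) is attained with equality. -/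
/-!
Both `p` and `q` are supported on the column `y = y₀`, where the Arimoto–Rényi conditional
entropy collapses to the Rényi entropy `(1/(1-α)) log₂ ∑ₓ p(x,y₀)^α` of that column. For `q` the
column is a point mass, of entropy `0`. For `p` the sum is
`(1-ε)^α + (|X|-1)·(ε/(|X|-1))^α = (1-ε)^α + (|X|-1)^(1-α) ε^α`, and it is at least
`∑ₓ p(x,y₀) = 1` because `t ≤ t^α` on `[0,1]` for `α ≤ 1`; hence the difference of the two
entropies is nonnegative and equals its absolute value.
-/

/-- Arimoto–Rényi conditional entropy of order `α` (base-2 logarithm),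
for a joint distribution `p : X → Y → ℝ`. -/
noncomputable def condRenyi {X Y : Type*} [Fintype X] [Fintype Y]
    (α : ℝ) (p : X → Y → ℝ) : ℝ :=
  (α / (1 - α)) * Real.logb 2 (∑ y, (∑ x, p x y ^ α) ^ (1 / α))

/-- Total variation distance between two joint distributions on `X × Y`. -/
noncomputable def TV {X Y : Type*} [Fintype X] [Fintype Y]
    (p q : X → Y → ℝ) : ℝ :=
  (1 / 2) * ∑ x, ∑ y, |p x y - q x y|

open Finset Real

lemma sum_ite_eq_add_card_sub_one_mul {X : Type*} [Fintype X] [DecidableEq X] (x₀ : X)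
    (a b : ℝ) :
    ∑ x, (if x = x₀ then a else b) = a + ((Fintype.card X : ℝ) - 1) * b := by
  rw [Fintype.sum_eq_add_sum_compl x₀, if_pos rfl,
    sum_congr rfl fun x hx => if_neg (by simpa using hx), sum_const, card_compl,
    card_singleton, nsmul_eq_mul, Nat.cast_sub (Fintype.card_pos_iff.mpr ⟨x₀⟩), Nat.cast_one]

lemma mul_div_rpow_eq_rpow_one_sub_mul {c t : ℝ} (hc : 0 < c) (ht : 0 ≤ t) (α : ℝ) :
    c * (t / c) ^ α = c ^ (1 - α) * t ^ α := by
  rw [div_rpow ht hc.le, rpow_sub hc, rpow_one]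
  field_simp

lemma one_le_sum_rpow_of_le_one {X : Type*} [Fintype X] {w : X → ℝ} (hw0 : ∀ x, 0 ≤ w x)
    (hw1 : ∑ x, w x = 1) {α : ℝ} (hα : α ≤ 1) : 1 ≤ ∑ x, w x ^ α :=
  hw1 ▸ sum_le_sum fun x _ => self_le_rpow_of_le_one (hw0 x)
    (hw1 ▸ single_le_sum (fun y _ => hw0 y) (mem_univ x)) hα

lemma card_sub_one_pos {X : Type*} [Fintype X] (hX : 1 < Fintype.card X) :
    (0 : ℝ) < Fintype.card X - 1 := by
  rw [sub_pos]
  exact_mod_cast hX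

section PerturbedDirac

variable {X : Type*} [Fintype X] [DecidableEq X] (x₀ : X) {ε : ℝ}

noncomputable def perturbedDirac (ε : ℝ) (x : X) : ℝ :=
  if x = x₀ then 1 - ε else ε / ((Fintype.card X : ℝ) - 1)

lemma perturbedDirac_nonneg (hε0 : 0 ≤ ε) (hε1 : ε ≤ 1) (x : X) :
    0 ≤ perturbedDirac x₀ ε x := by
  have hcard : (1 : ℝ) ≤ Fintype.card X := Nat.one_le_cast.2 (Fintype.card_pos_iff.2 ⟨x₀⟩)
  unfold perturbedDirac
  split_ifs
  · linarith
  · exact div_nonneg hε0 (by linarith)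

lemma sum_perturbedDirac (hX : 1 < Fintype.card X) : ∑ x, perturbedDirac x₀ ε x = 1 := by
  simp only [perturbedDirac, sum_ite_eq_add_card_sub_one_mul]
  rw [mul_div_cancel₀ _ (card_sub_one_pos hX).ne']
  ring

lemma sum_perturbedDirac_rpow (hX : 1 < Fintype.card X) (hε0 : 0 ≤ ε) (α : ℝ) :
    ∑ x, perturbedDirac x₀ ε x ^ α =
      (1 - ε) ^ α + ((Fintype.card X : ℝ) - 1) ^ (1 - α) * ε ^ α := by
  simp only [perturbedDirac, apply_ite (· ^ α), sum_ite_eq_add_card_sub_one_mul,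
    mul_div_rpow_eq_rpow_one_sub_mul (card_sub_one_pos hX) hε0]

lemma sum_abs_perturbedDirac_sub_dirac (hX : 1 < Fintype.card X) (hε0 : 0 ≤ ε) :
    ∑ x, |perturbedDirac x₀ ε x - if x = x₀ then 1 else 0| = 2 * ε := by
  have habs : ∀ x, |perturbedDirac x₀ ε x - if x = x₀ then 1 else 0| =
      if x = x₀ then ε else ε / ((Fintype.card X : ℝ) - 1) := fun x => by
    unfold perturbedDirac
    split_ifs
    · rw [sub_sub_cancel_left, abs_neg, abs_of_nonneg hε0]
    · rw [sub_zero, abs_of_nonneg (div_nonneg hε0 (card_sub_one_pos hX).le)]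
  rw [sum_congr rfl fun x _ => habs x, sum_ite_eq_add_card_sub_one_mul,
    mul_div_cancel₀ _ (card_sub_one_pos hX).ne']
  ring

end PerturbedDirac

section SupportedOnColumn

variable {X Y : Type*} [Fintype X] [Fintype Y] {p q : X → Y → ℝ} {y₀ : Y}

lemma TV_eq_of_supported_on_column (hp : ∀ x y, y ≠ y₀ → p x y = 0)
    (hq : ∀ x y, y ≠ y₀ → q x y = 0) :
    TV p q = 1 / 2 * ∑ x, |p x y₀ - q x y₀| := by
  rw [TV]
  congr 1
  refine sum_congr rfl fun x _ => sum_eq_single y₀ (fun y _ hy => ?_) (by simp)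
  rw [hp x y hy, hq x y hy, sub_zero, abs_zero]

lemma condRenyi_eq_of_supported_on_column {α : ℝ} (hα : α ≠ 0)
    (hp : ∀ x y, y ≠ y₀ → p x y = 0) (hp0 : ∀ x, 0 ≤ p x y₀) :
    condRenyi α p = 1 / (1 - α) * logb 2 (∑ x, p x y₀ ^ α) := by
  have hcol : ∑ y, (∑ x, p x y ^ α) ^ (1 / α) = (∑ x, p x y₀ ^ α) ^ (1 / α) :=
    sum_eq_single y₀
      (fun y _ hy => by simp [hp _ y hy, zero_rpow hα, zero_rpow (inv_ne_zero hα)]) (by simp)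
  rcases (sum_nonneg fun x _ => rpow_nonneg (hp0 x) α : 0 ≤ ∑ x, p x y₀ ^ α).eq_or_lt
    with hzero | hpos
  · rw [condRenyi, hcol, ← hzero, zero_rpow (one_div_ne_zero hα)]
    simp
  · rw [condRenyi, hcol, logb_rpow_eq_mul_logb_of_pos hpos]
    field_simp

end SupportedOnColumn

theorem arce_continuity_bound_tight
    {X Y : Type*} [Fintype X] [Fintype Y] [DecidableEq X] [DecidableEq Y]
    (hX : 2 ≤ Fintype.card X)
    (α ε : ℝ) (hα : α ∈ Set.Ioo (0 : ℝ) 1)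
    (hε : ε ∈ Set.Ioc (0 : ℝ) (1 - 1 / (Fintype.card X : ℝ)))
    (x₀ : X) (y₀ : Y)
    (q p : X → Y → ℝ)
    (hq : q = fun x y => if x = x₀ ∧ y = y₀ then 1 else 0)
    (hp : p = fun x y =>
      if y = y₀ then
        (if x = x₀ then 1 - ε else ε / ((Fintype.card X : ℝ) - 1))
      else 0) :
    TV p q = ε ∧
    condRenyi α q = 0 ∧
    condRenyi α p =
      (1 / (1 - α)) *
        Real.logb 2 ((1 - ε) ^ α + ((Fintype.card X : ℝ) - 1) ^ (1 - α) * ε ^ α) ∧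
    |condRenyi α p - condRenyi α q| =
      (1 / (1 - α)) *
        Real.logb 2 ((1 - ε) ^ α + ((Fintype.card X : ℝ) - 1) ^ (1 - α) * ε ^ α) := by
  obtain ⟨hα0, hα1⟩ := hα
  obtain ⟨hε0, hε1⟩ := hε
  have hε_le_one : ε ≤ 1 := hε1.trans (by simp)
  have hp_col : ∀ x y, y ≠ y₀ → p x y = 0 := by simp_all
  have hq_col : ∀ x y, y ≠ y₀ → q x y = 0 := by simp_all
  have hp₀ : ∀ x, p x y₀ = perturbedDirac x₀ ε x := by simp [hp, perturbedDirac]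
  have hq₀ : ∀ x, q x y₀ = if x = x₀ then 1 else 0 := by simp [hq]
  have hp_nonneg : ∀ x, 0 ≤ p x y₀ := fun x =>
    hp₀ x ▸ perturbedDirac_nonneg x₀ hε0.le hε_le_one x
  have hHq : condRenyi α q = 0 := by
    rw [condRenyi_eq_of_supported_on_column hα0.ne' hq_col (fun x => by rw [hq₀]; positivity)]
    simp [hq₀, apply_ite (· ^ α), zero_rpow hα0.ne']
  have hHp : condRenyi α p = 1 / (1 - α) *
      logb 2 ((1 - ε) ^ α + ((Fintype.card X : ℝ) - 1) ^ (1 - α) * ε ^ α) := by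
    rw [condRenyi_eq_of_supported_on_column hα0.ne' hp_col hp_nonneg,
      ← sum_perturbedDirac_rpow x₀ hX hε0.le]
    simp only [hp₀]
  refine ⟨?_, hHq, hHp, ?_⟩
  · rw [TV_eq_of_supported_on_column hp_col hq_col]
    simp only [hp₀, hq₀, sum_abs_perturbedDirac_sub_dirac x₀ hX hε0.le]
    ring
  · rw [hHq, hHp, sub_zero, abs_of_nonneg]
    rw [← sum_perturbedDirac_rpow x₀ hX hε0.le]
    refine mul_nonneg (one_div_nonneg.2 (by linarith)) (logb_nonneg one_lt_two ?_)
    exact one_le_sum_rpow_of_le_one (perturbedDirac_nonneg x₀ hε0.le hε_le_one)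
      (sum_perturbedDirac x₀ hX) hα1.le
end

section
/- Let p be a joint probability distribution on finite alphabets X × Y, all of whose entries p(x,y) are strictly positive. Then the limit as α → 1⁻ (over α ∈ (0,1)) of the Arimoto–Rényi conditional entropy H_α(X|Y)_p equals the conditional Shannon entropy H(X|Y)_p. -/
/-- Conditional Shannon entropy (base-2 logarithm) of a joint distribution
`p : X → Y → ℝ`; terms with `p x y = 0` vanish. -/
noncomputable def condShannon {X Y : Type*} [Fintype X] [Fintype Y]
    (p : X → Y → ℝ) : ℝ :=
  -∑ y, ∑ x, p x y * Real.logb 2 (p x y / ∑ x', p x' y)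

/-!
With `g α = ∑ y, (∑ x, p x y ^ α) ^ (1 / α)`, normalisation gives `g 1 = 1`, so
`H_α(X|Y) = -α · (logb 2 (g α) - logb 2 (g 1)) / (α - 1)` tends to `-(logb 2 ∘ g)'(1)` as `α → 1`.
Differentiating `(∑ x, p x y ^ α) ^ (1 / α)` at `α = 1` gives
`∑ x, p x y log p x y - p_Y(y) log p_Y(y)`, and summed over `y` this is `-H(X|Y) · log 2`.
-/

open Filter Topology Real

theorem hasDerivAt_sum_rpow_rpow_one_div_at_one {ι : Type*} [Fintype ι] [Nonempty ι]
    {w : ι → ℝ} (hw : ∀ i, 0 < w i) :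
    HasDerivAt (fun α : ℝ => (∑ i, w i ^ α) ^ (1 / α))
      (∑ i, w i * log (w i) - (∑ i, w i) * log (∑ i, w i)) 1 := by
  have hsum : HasDerivAt (fun α : ℝ => ∑ i, w i ^ α) (∑ i, w i * log (w i)) 1 :=
    HasDerivAt.fun_sum fun i _ => by
      simpa using (hasStrictDerivAt_const_rpow (hw i) 1).hasDerivAt
  have hexp : HasDerivAt (fun α : ℝ => 1 / α) (-1) 1 := by
    simpa [one_div] using hasDerivAt_inv (one_ne_zero (α := ℝ))
  have hpos : 0 < ∑ i, w i ^ (1 : ℝ) := by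
    simpa using Finset.sum_pos (fun i _ => hw i) Finset.univ_nonempty
  simpa [sub_eq_add_neg] using hsum.rpow hexp hpos

theorem tendsto_div_one_sub_mul_of_hasDerivAt {f : ℝ → ℝ} {f' : ℝ} (hf : HasDerivAt f f' 1)
    (hf1 : f 1 = 0) :
    Tendsto (fun α => α / (1 - α) * f α) (𝓝[≠] 1) (𝓝 (-f')) := by
  have hslope : Tendsto (fun α => -α * slope f 1 α) (𝓝[≠] 1) (𝓝 (-1 * f')) :=
    (continuous_neg.tendsto' 1 (-1) rfl).mono_left nhdsWithin_le_nhds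
      |>.mul (hasDerivAt_iff_tendsto_slope.mp hf)
  rw [neg_one_mul] at hslope
  refine hslope.congr' (eventually_nhdsWithin_of_forall fun α (hα : α ≠ 1) => ?_)
  have h1 : α - 1 ≠ 0 := sub_ne_zero.mpr hα
  have h2 : 1 - α ≠ 0 := sub_ne_zero.mpr hα.symm
  rw [slope_def_field, hf1]
  field_simp
  ring

theorem condShannon_eq_neg_div_log_two {X Y : Type*} [Fintype X] [Fintype Y] {p : X → Y → ℝ}
    (hp : ∀ x y, 0 < p x y) :
    condShannon p =
      -(∑ y, (∑ x, p x y * log (p x y) - (∑ x, p x y) * log (∑ x, p x y))) / log 2 := by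
  rw [condShannon, neg_div, Finset.sum_div]
  congr 1
  refine Finset.sum_congr rfl fun y _ => ?_
  rw [Finset.sum_mul, ← Finset.sum_sub_distrib, Finset.sum_div]
  refine Finset.sum_congr rfl fun x _ => ?_
  have hq : 0 < ∑ x, p x y :=
    (hp x y).trans_le (Finset.single_le_sum (fun x _ => (hp x y).le) (Finset.mem_univ x))
  rw [logb, log_div (hp x y).ne' hq.ne']
  ring

theorem arce_tendsto_condShannon
    {X Y : Type*} [Fintype X] [Fintype Y]
    (p : X → Y → ℝ)
    (hp0 : ∀ x y, 0 < p x y) (hp1 : (∑ x, ∑ y, p x y) = 1) :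
    Filter.Tendsto (fun α : ℝ => condRenyi α p)
      (nhdsWithin 1 (Set.Ioo (0 : ℝ) 1))
      (nhds (condShannon p)) := by
  have : Nonempty X := by
    by_contra h
    simp [not_nonempty_iff.mp h] at hp1
  set g : ℝ → ℝ := fun α => ∑ y, (∑ x, p x y ^ α) ^ (1 / α)
  have hg : HasDerivAt g _ 1 :=
    HasDerivAt.fun_sum fun y _ => hasDerivAt_sum_rpow_rpow_one_div_at_one (hp0 · y)
  have hg1 : g 1 = 1 := by simpa [g, Finset.sum_comm (γ := X)] using hp1
  have hlogb : HasDerivAt (fun α => logb 2 (g α)) _ 1 :=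
    (hg.log (by simp [hg1])).div_const (log 2)
  have hlim := tendsto_div_one_sub_mul_of_hasDerivAt hlogb (by simp [hg1])
  rw [hg1, div_one, ← neg_div, ← condShannon_eq_neg_div_log_two hp0] at hlim
  exact hlim.mono_left (nhdsWithin_mono _ fun α hα => hα.2.ne)
end

section
/- Let α ∈ (0,1) and let p and q be joint probability distributions on finite alphabets X × Y such that for every y ∈ Y the column vector (q(x,y))_{x∈X} is majorized by the column vector (p(x,y))_{x∈X}. Then H_α(X|Y)_p ≤ H_α(X|Y)_q. -/
/-!
Fix a column `y`. Since `q(·, y) ≺ p(·, y)` and `t ↦ t ^ α` is concave, Karamata's inequality gives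
`∑ₓ p(x, y) ^ α ≤ ∑ₓ q(x, y) ^ α`: sort both columns decreasingly, bound each `p`-entry by the
tangent line of `t ↦ t ^ α` at the matching `q`-entry, and sum by parts, using that the slopes
increase along the sorted order while the partial sums of the differences are nonnegative and
add up to zero. Raising to the power `1 / α > 0`, summing over `y`, taking `log₂` and multiplying
by `α / (1 - α) > 0` preserves the inequality.
-/

/-- The sum of the `k` largest entries of a real vector, expressed as the
supremum of sums over subsets of cardinality `k`. -/
noncomputable def kLargestSum {ι : Type*} [Fintype ι] (u : ι → ℝ) (k : ℕ) : ℝ :=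
  sSup {s : ℝ | ∃ A : Finset ι, A.card = k ∧ s = ∑ i ∈ A, u i}

/-- `u` is majorized by `v`: for every `k = 1, …, d` the sum of the `k` largest
entries of `u` is at most that of `v`, with equality of total sums. -/
def Majorized {ι : Type*} [Fintype ι] (u v : ι → ℝ) : Prop :=
  (∀ k : ℕ, 1 ≤ k → k ≤ Fintype.card ι → kLargestSum u k ≤ kLargestSum v k) ∧
    (∑ i, u i) = ∑ i, v i

open Finset Real Filter Topology

lemma rpow_le_rpow_add_mul_sub {α : ℝ} (hα0 : 0 ≤ α) (hα1 : α ≤ 1) {u v : ℝ} (hu : 0 ≤ u)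
    (hv : 0 < v) : u ^ α ≤ v ^ α + α * v ^ (α - 1) * (u - v) := by
  have hamgm := geom_mean_le_arith_mean2_weighted hα0 (sub_nonneg.2 hα1) hu hv.le
    (add_sub_cancel α 1)
  have hv1 : v ^ (1 - α) * v ^ (α - 1) = 1 := by
    rw [← rpow_add hv, sub_add_sub_cancel', sub_self, rpow_zero]
  have hvα : v * v ^ (α - 1) = v ^ α := by
    simpa using (rpow_add hv 1 (α - 1)).symm
  calc u ^ α = u ^ α * v ^ (1 - α) * v ^ (α - 1) := by rw [mul_assoc, hv1, mul_one]
    _ ≤ (α * u + (1 - α) * v) * v ^ (α - 1) := by gcongr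
    _ = v ^ α + α * v ^ (α - 1) * (u - v) := by rw [← hvα]; ring

lemma sum_mul_nonpos_of_monotoneOn {n : ℕ} {c δ : ℕ → ℝ} (hc : MonotoneOn c (Set.Iio n))
    (hδ : ∀ k ≤ n, 0 ≤ ∑ i ∈ range k, δ i) (hδn : ∑ i ∈ range n, δ i = 0) :
    ∑ i ∈ range n, c i * δ i ≤ 0 := by
  have := sum_range_by_parts c δ n
  simp only [smul_eq_mul, hδn, mul_zero, zero_sub] at this
  rw [this, neg_nonpos]
  refine sum_nonneg fun i hi => mul_nonneg ?_ (hδ _ ?_)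
  · rw [mem_range] at hi
    exact sub_nonneg.2 (hc (by simp; omega) (by simp; omega) (by omega))
  · rw [mem_range] at hi; omega

section Karamata

variable {α : ℝ} {n : ℕ} {a b : ℕ → ℝ}

lemma sum_rpow_le_sum_rpow_of_pos (hα0 : 0 ≤ α) (hα1 : α ≤ 1)
    (ha : AntitoneOn a (Set.Iio n)) (ha0 : ∀ i < n, 0 < a i) (hb0 : ∀ i < n, 0 ≤ b i)
    (hpart : ∀ k ≤ n, ∑ i ∈ range k, a i ≤ ∑ i ∈ range k, b i)
    (htot : ∑ i ∈ range n, a i = ∑ i ∈ range n, b i) :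
    ∑ i ∈ range n, b i ^ α ≤ ∑ i ∈ range n, a i ^ α := by
  have hslope : MonotoneOn (fun i => α * a i ^ (α - 1)) (Set.Iio n) := fun i hi j hj hij =>
    mul_le_mul_of_nonneg_left (rpow_le_rpow_of_nonpos (ha0 j hj) (ha hi hj hij) (by linarith)) hα0
  have habel : ∑ i ∈ range n, α * a i ^ (α - 1) * (b i - a i) ≤ 0 :=
    sum_mul_nonpos_of_monotoneOn hslope
      (fun k hk => by rw [sum_sub_distrib, sub_nonneg]; exact hpart k hk)
      (by rw [sum_sub_distrib, htot, sub_self])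
  calc ∑ i ∈ range n, b i ^ α
      ≤ ∑ i ∈ range n, (a i ^ α + α * a i ^ (α - 1) * (b i - a i)) :=
        sum_le_sum fun i hi => rpow_le_rpow_add_mul_sub hα0 hα1 (hb0 i (mem_range.1 hi))
          (ha0 i (mem_range.1 hi))
    _ ≤ ∑ i ∈ range n, a i ^ α := by rw [sum_add_distrib]; linarith

lemma sum_rpow_le_sum_rpow_of_partial_sums_le (hα0 : 0 ≤ α) (hα1 : α ≤ 1)
    (ha : AntitoneOn a (Set.Iio n)) (ha0 : ∀ i < n, 0 ≤ a i) (hb0 : ∀ i < n, 0 ≤ b i)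
    (hpart : ∀ k ≤ n, ∑ i ∈ range k, a i ≤ ∑ i ∈ range k, b i)
    (htot : ∑ i ∈ range n, a i = ∑ i ∈ range n, b i) :
    ∑ i ∈ range n, b i ^ α ≤ ∑ i ∈ range n, a i ^ α := by
  -- tangent lines of `t ↦ t ^ α` exist only at positive points: shift by `ε` and let `ε → 0`
  have hshift : ∀ ε > 0, ∑ i ∈ range n, (b i + ε) ^ α ≤ ∑ i ∈ range n, (a i + ε) ^ α := by
    intro ε hε
    refine sum_rpow_le_sum_rpow_of_pos hα0 hα1 (fun i hi j hj hij => by simp [ha hi hj hij])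
      (fun i hi => by linarith [ha0 i hi]) (fun i hi => by linarith [hb0 i hi])
      (fun k hk => by simpa [sum_add_distrib] using hpart k hk) (by simp [sum_add_distrib, htot])
  have hlim : ∀ v : ℕ → ℝ, Tendsto (fun ε => ∑ i ∈ range n, (v i + ε) ^ α) (𝓝[>] 0)
      (𝓝 (∑ i ∈ range n, v i ^ α)) := by
    intro v
    refine tendsto_nhdsWithin_of_tendsto_nhds (Continuous.tendsto' ?_ 0 _ (by simp))
    exact continuous_finsetSum _ fun i _ =>
      (continuous_const.add continuous_id).rpow_const fun _ => Or.inr hα0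
  exact le_of_tendsto_of_tendsto (hlim b) (hlim a) (eventually_mem_nhdsWithin.mono hshift)

end Karamata

lemma Finset.sum_le_sum_of_card_eq {ι M : Type*} [DecidableEq ι] [AddCommMonoid M] [LinearOrder M]
    [IsOrderedAddMonoid M] {s t : Finset ι} {f : ι → M} (hst : #s = #t)
    (hf : ∀ i ∈ s \ t, ∀ j ∈ t \ s, f i ≤ f j) : ∑ i ∈ s, f i ≤ ∑ i ∈ t, f i := by
  rw [← sum_inter_add_sum_sdiff s t, ← sum_inter_add_sum_sdiff t s, inter_comm]
  refine add_le_add_right ?_ _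
  obtain h | ⟨j₀, hj₀, hmin⟩ := (t \ s).eq_empty_or_nonempty.imp_right (exists_min_image _ f)
  · rw [h, card_eq_zero.1 ((card_sdiff_comm hst).trans (card_eq_zero.2 h))]
  · calc ∑ i ∈ s \ t, f i ≤ #(s \ t) • f j₀ := sum_le_card_nsmul _ _ _ fun i hi => hf i hi j₀ hj₀
      _ = #(t \ s) • f j₀ := by rw [card_sdiff_comm hst]
      _ ≤ ∑ j ∈ t \ s, f j := card_nsmul_le_sum _ _ _ hmin

section Rearrangement

variable {ι : Type*} [Fintype ι]

lemma exists_equiv_fin_antitone (u : ι → ℝ) :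
    ∃ e : ι ≃ Fin (Fintype.card ι), Antitone (u ∘ e.symm) := by
  let g := u ∘ (Fintype.equivFin ι).symm
  refine ⟨(Fintype.equivFin ι).trans (Tuple.sort (-g)).symm, fun i j hij => ?_⟩
  simpa [g] using Tuple.monotone_sort (-g) hij

noncomputable def sortingEquiv (u : ι → ℝ) : ι ≃ Fin (Fintype.card ι) :=
  (exists_equiv_fin_antitone u).choose

lemma antitone_comp_sortingEquiv_symm (u : ι → ℝ) : Antitone (u ∘ (sortingEquiv u).symm) :=
  (exists_equiv_fin_antitone u).choose_spec

lemma sum_range_card_eq_sum_sortingEquiv {M : Type*} [AddCommMonoid M] (u : ι → ℝ) (F : ℕ → M) :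
    ∑ i ∈ range (Fintype.card ι), F i = ∑ x, F (sortingEquiv u x) := by
  rw [← Fin.sum_univ_eq_sum_range, ← (sortingEquiv u).sum_comp]

noncomputable def decreasingRearrangement (u : ι → ℝ) (i : ℕ) : ℝ :=
  if h : i < Fintype.card ι then u ((sortingEquiv u).symm ⟨i, h⟩) else 0

variable {u : ι → ℝ}

@[simp]
lemma decreasingRearrangement_sortingEquiv (x : ι) :
    decreasingRearrangement u (sortingEquiv u x) = u x := by
  simp [decreasingRearrangement]

lemma antitoneOn_decreasingRearrangement :
    AntitoneOn (decreasingRearrangement u) (Set.Iio (Fintype.card ι)) := fun i hi j hj hij => by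
  simp only [Set.mem_Iio] at hi hj
  simp only [decreasingRearrangement, dif_pos hi, dif_pos hj]
  exact antitone_comp_sortingEquiv_symm u (Fin.mk_le_mk.2 hij)

lemma decreasingRearrangement_nonneg (hu : ∀ x, 0 ≤ u x) (i : ℕ) :
    0 ≤ decreasingRearrangement u i := by
  unfold decreasingRearrangement
  split_ifs
  exacts [hu _, le_rfl]

lemma sum_comp_decreasingRearrangement {M : Type*} [AddCommMonoid M] (f : ℝ → M) :
    ∑ i ∈ range (Fintype.card ι), f (decreasingRearrangement u i) = ∑ x, f (u x) := by
  simp [sum_range_card_eq_sum_sortingEquiv u]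

lemma kLargestSum_eq_sum_decreasingRearrangement {k : ℕ} (hk : k ≤ Fintype.card ι) :
    kLargestSum u k = ∑ i ∈ range k, decreasingRearrangement u i := by
  classical
  set σ := sortingEquiv u
  let top : Finset ι := {x | (σ x : ℕ) < k}
  have hmem : ∀ x, x ∈ top ↔ (σ x : ℕ) < k := by simp [top]
  have hcard : #top = k := by
    rw [← card_map σ.toEmbedding, map_filter]
    simpa [Fin.card_filter_val_lt] using hk
  have hsum : ∑ x ∈ top, u x = ∑ i ∈ range k, decreasingRearrangement u i := by
    have hrange : range k = {i ∈ range (Fintype.card ι) | i < k} := by ext; simp; omega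
    rw [sum_filter, hrange, sum_filter, sum_range_card_eq_sum_sortingEquiv u]
    simp [σ]
  rw [kLargestSum, ← hsum]
  refine IsGreatest.csSup_eq ⟨⟨top, hcard, rfl⟩, ?_⟩
  rintro _ ⟨A, hA, rfl⟩
  refine sum_le_sum_of_card_eq (hA.trans hcard.symm) fun x hx y hy => ?_
  have hyx : σ y ≤ σ x := Fin.le_def.2 ((hmem y).1 (mem_sdiff.1 hy).1 |>.le.trans
    (not_lt.1 ((hmem x).not.1 (mem_sdiff.1 hx).2)))
  simpa [σ] using antitone_comp_sortingEquiv_symm u hyx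

end Rearrangement

theorem Majorized.sum_rpow_le {ι : Type*} [Fintype ι] {α : ℝ} (hα0 : 0 ≤ α) (hα1 : α ≤ 1)
    {u v : ι → ℝ} (hu : ∀ x, 0 ≤ u x) (hv : ∀ x, 0 ≤ v x) (h : Majorized u v) :
    ∑ x, v x ^ α ≤ ∑ x, u x ^ α := by
  rw [← sum_comp_decreasingRearrangement (· ^ α), ← sum_comp_decreasingRearrangement (· ^ α)]
  refine sum_rpow_le_sum_rpow_of_partial_sums_le hα0 hα1 antitoneOn_decreasingRearrangement
    (fun i _ => decreasingRearrangement_nonneg hu i)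
    (fun i _ => decreasingRearrangement_nonneg hv i)
    (fun k hk => ?_) ((sum_comp_decreasingRearrangement id).trans
      (h.2.trans (sum_comp_decreasingRearrangement id).symm))
  obtain rfl | hk0 := Nat.eq_zero_or_pos k
  · simp
  · simpa only [kLargestSum_eq_sum_decreasingRearrangement hk] using h.1 k hk0 hk

theorem arce_marginally_schur_concave_of_lt_one_general
    {X Y : Type*} [Fintype X] [Fintype Y]
    (α : ℝ) (hα : α ∈ Set.Ioo (0 : ℝ) 1)
    (p q : X → Y → ℝ)
    (hp0 : ∀ x y, 0 ≤ p x y) (hp1 : (∑ x, ∑ y, p x y) = 1)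
    (hq0 : ∀ x y, 0 ≤ q x y)
    (hmaj : ∀ y : Y, Majorized (fun x => q x y) (fun x => p x y)) :
    condRenyi α p ≤ condRenyi α q := by
  obtain ⟨hα0, hα1⟩ := hα
  have hcol (y : Y) : ∑ x, p x y ^ α ≤ ∑ x, q x y ^ α :=
    (hmaj y).sum_rpow_le hα0.le hα1.le (hq0 · y) (hp0 · y)
  obtain ⟨x₀, y₀, hpos⟩ : ∃ x y, 0 < p x y := by
    by_contra! h
    simp [le_antisymm (h _ _) (hp0 _ _)] at hp1
  have hnonneg (y : Y) : 0 ≤ ∑ x, p x y ^ α := sum_nonneg fun x _ => rpow_nonneg (hp0 x y) α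
  have hSp : 0 < ∑ y, (∑ x, p x y ^ α) ^ (1 / α) :=
    sum_pos' (fun y _ => rpow_nonneg (hnonneg y) _) ⟨y₀, mem_univ _, rpow_pos_of_pos
      (sum_pos' (fun x _ => rpow_nonneg (hp0 x y₀) α) ⟨x₀, mem_univ _, rpow_pos_of_pos hpos α⟩) _⟩
  unfold condRenyi
  refine mul_le_mul_of_nonneg_left (logb_le_logb_of_le one_lt_two hSp ?_)
    (div_nonneg hα0.le (sub_nonneg.2 hα1.le))
  exact sum_le_sum fun y _ => rpow_le_rpow (hnonneg y) (hcol y) (one_div_nonneg.2 hα0.le)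

theorem arce_marginally_schur_concave_of_lt_one
    {X Y : Type*} [Fintype X] [Fintype Y]
    (α : ℝ) (hα : α ∈ Set.Ioo (0 : ℝ) 1)
    (p q : X → Y → ℝ)
    (hp0 : ∀ x y, 0 ≤ p x y) (hp1 : (∑ x, ∑ y, p x y) = 1)
    (hq0 : ∀ x y, 0 ≤ q x y) (hq1 : (∑ x, ∑ y, q x y) = 1)
    (hmaj : ∀ y : Y, Majorized (fun x => q x y) (fun x => p x y)) :
    condRenyi α p ≤ condRenyi α q :=
  arce_marginally_schur_concave_of_lt_one_general α hα p q hp0 hp1 hq0 hmaj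
end

section
/- Let v, v′, w ∈ ℝⁿ be vectors with nonnegative entries and let S ⊆ {1,…,n} be such that vⱼ = v′ⱼ = 0 for all j ∉ S and wⱼ = 0 for all j ∈ S. If v′ is majorized by v, then v′ + w is majorized by v + w. -/
/-!
Split a `k`-set `A` into `A ∩ S`, where only `v'` contributes, and `A \ S`, where only `w` does.
If `|A ∩ S| = m`, majorization bounds the first part by the sum of the `m` largest entries of `v`;
since `v` is nonnegative and vanishes off `S`, those can be taken inside `S`, hence disjoint from
`A \ S`, and together with `A \ S` they form a `k`-set witnessing the bound for `v + w`.
-/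

open Finset

section kLargestSum

variable {ι : Type*} [Fintype ι]

lemma finite_setOf_sum_card_eq (u : ι → ℝ) (k : ℕ) :
    {s : ℝ | ∃ A : Finset ι, #A = k ∧ s = ∑ i ∈ A, u i}.Finite := by
  refine (Set.finite_range fun B : Finset ι ↦ ∑ i ∈ B, u i).subset ?_
  rintro _ ⟨B, -, rfl⟩
  exact ⟨B, rfl⟩

lemma sum_le_kLargestSum (u : ι → ℝ) {k : ℕ} {A : Finset ι} (hA : #A = k) :
    ∑ i ∈ A, u i ≤ kLargestSum u k :=
  le_csSup (finite_setOf_sum_card_eq u k).bddAbove ⟨A, hA, rfl⟩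

lemma exists_sum_eq_kLargestSum (u : ι → ℝ) {k : ℕ} (hk : k ≤ Fintype.card ι) :
    ∃ A : Finset ι, #A = k ∧ ∑ i ∈ A, u i = kLargestSum u k := by
  obtain ⟨A, -, hA⟩ := exists_subset_card_eq (s := (univ : Finset ι)) (by simpa using hk)
  obtain ⟨B, hB, hsum⟩ :=
    Set.Nonempty.csSup_mem (by exact ⟨_, A, hA, rfl⟩) (finite_setOf_sum_card_eq u k)
  exact ⟨B, hB, hsum.symm⟩

lemma kLargestSum_zero (u : ι → ℝ) : kLargestSum u 0 = 0 := by
  simp [kLargestSum]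

lemma exists_subset_kLargestSum_le_sum [DecidableEq ι] {u : ι → ℝ} {S : Finset ι}
    (hu : ∀ i ∈ S, 0 ≤ u i) (huS : ∀ i ∉ S, u i = 0) {k : ℕ} (hk : k ≤ #S) :
    ∃ B ⊆ S, #B = k ∧ kLargestSum u k ≤ ∑ i ∈ B, u i := by
  obtain ⟨C, hCk, hC⟩ := exists_sum_eq_kLargestSum u (hk.trans (card_le_univ S))
  obtain ⟨B, hCB, hBS, hBk⟩ := exists_subsuperset_card_eq (inter_subset_right (s₁ := C))
    ((card_le_card inter_subset_left).trans hCk.le) hk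
  refine ⟨B, hBS, hBk, ?_⟩
  calc kLargestSum u k = ∑ i ∈ C ∩ S, u i := by
        rw [← hC, sum_subset inter_subset_left fun i hiC hi ↦
          huS i fun hiS ↦ hi (mem_inter.2 ⟨hiC, hiS⟩)]
    _ ≤ ∑ i ∈ B, u i := sum_le_sum_of_subset_of_nonneg hCB fun i hi _ ↦ hu i (hBS hi)

lemma Majorized.kLargestSum_le {u v : ι → ℝ} (h : Majorized u v) {k : ℕ}
    (hk : k ≤ Fintype.card ι) : kLargestSum u k ≤ kLargestSum v k := by
  rcases k.eq_zero_or_pos with rfl | hk0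
  · simp [kLargestSum_zero]
  · exact h.1 k hk0 hk

end kLargestSum

lemma sum_add_eq_sum_inter_add_sum_sdiff {ι M : Type*} [DecidableEq ι] [AddCommMonoid M]
    {f g : ι → M} {S : Finset ι}
    (hf : ∀ i ∉ S, f i = 0) (hg : ∀ i ∈ S, g i = 0) (A : Finset ι) :
    ∑ i ∈ A, (f + g) i = ∑ i ∈ A ∩ S, f i + ∑ i ∈ A \ S, g i := by
  rw [← sum_inter_add_sum_sdiff A S]
  congr 1 <;> refine sum_congr rfl fun i hi ↦ ?_
  · simp [hg i (mem_inter.1 hi).2]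
  · simp [hf i (mem_sdiff.1 hi).2]

theorem majorized_add_of_disjoint_support_general
    {n : ℕ} (v v' w : Fin n → ℝ)
    (hv : ∀ j, 0 ≤ v j)
    (S : Finset (Fin n))
    (hvS : ∀ j ∉ S, v j = 0) (hv'S : ∀ j ∉ S, v' j = 0)
    (hwS : ∀ j ∈ S, w j = 0)
    (hmaj : Majorized v' v) :
    Majorized (v' + w) (v + w) := by
  refine ⟨fun k _ hk ↦ ?_, by simp only [Pi.add_apply, sum_add_distrib, hmaj.2]⟩
  obtain ⟨A, hAk, hA⟩ := exists_sum_eq_kLargestSum (v' + w) hk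
  set m := #(A ∩ S)
  obtain ⟨B, hBS, hBm, hB⟩ := exists_subset_kLargestSum_le_sum (fun i _ ↦ hv i) hvS
    (card_le_card (inter_subset_right (s₁ := A)))
  have hBA : (B ∪ A \ S) ∩ S = B ∧ (B ∪ A \ S) \ S = A \ S := by
    rw [union_inter_distrib_right, union_sdiff_distrib, inter_eq_left.2 hBS,
      sdiff_eq_empty_iff_subset.2 hBS]
    simp
  have hcard : #(B ∪ A \ S) = k := by
    rw [card_union_of_disjoint (disjoint_sdiff.mono_left hBS), hBm, ← hAk,
      card_inter_add_card_sdiff]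
  calc kLargestSum (v' + w) k = ∑ i ∈ A ∩ S, v' i + ∑ i ∈ A \ S, w i := by
        rw [← hA, sum_add_eq_sum_inter_add_sum_sdiff hv'S hwS]
    _ ≤ kLargestSum v m + ∑ i ∈ A \ S, w i := by
        gcongr
        exact (sum_le_kLargestSum v' rfl).trans (hmaj.kLargestSum_le (card_le_univ _))
    _ ≤ ∑ i ∈ B ∪ A \ S, (v + w) i := by
        rw [sum_add_eq_sum_inter_add_sum_sdiff hvS hwS, hBA.1, hBA.2]
        gcongr
    _ ≤ kLargestSum (v + w) k := sum_le_kLargestSum _ hcard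

theorem majorized_add_of_disjoint_support
    {n : ℕ} (v v' w : Fin n → ℝ)
    (hv : ∀ j, 0 ≤ v j) (hv' : ∀ j, 0 ≤ v' j) (hw : ∀ j, 0 ≤ w j)
    (S : Finset (Fin n))
    (hvS : ∀ j ∉ S, v j = 0) (hv'S : ∀ j ∉ S, v' j = 0)
    (hwS : ∀ j ∈ S, w j = 0)
    (hmaj : Majorized v' v) :
    Majorized (v' + w) (v + w) :=
  majorized_add_of_disjoint_support_general v v' w hv S hvS hv'S hwS hmaj
end

section
/- Let α ∈ [0,1), let m ≥ 2 be an integer, and let t̃ ∈ (0, 1 − 1/m]. Then the function f(u) := log₂( u^α + (m−1)^{1−α} · t̃^α ) − α · log₂( u + t̃ ) is nonincreasing on the interval [1 − t̃, ∞); that is, for all u₂ ≥ u₁ ≥ 1 − t̃ one has f(u₂) ≤ f(u₁). -/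
/-!
Up to the factor `1 / log 2`, `f(u) = log (u ^ α + C) - α log (u + t)` with
`C = (m - 1) ^ (1 - α) * t ^ α`, whose derivative `α u ^ (α - 1) / (u ^ α + C) - α / (u + t)`
is nonpositive as soon as `t u ^ (α - 1) ≤ C`. Writing `t u ^ (α - 1) = t ^ α (t / u) ^ (1 - α)`,
this follows from `t / u ≤ m - 1`, which is what the constraints `u ≥ 1 - t` and `t ≤ 1 - 1 / m`
guarantee.
-/

open Real Set

lemma mul_rpow_sub_one_le {α t u c : ℝ} (hα : α ≤ 1) (ht : 0 ≤ t) (hu : 0 < u)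
    (htu : t ≤ c * u) : t * u ^ (α - 1) ≤ c ^ (1 - α) * t ^ α := by
  have hsplit : t * u ^ (α - 1) = (t / u) ^ (1 - α) * t ^ α := by
    rw [div_rpow ht hu.le, div_mul_eq_mul_div, ← rpow_add' ht (by norm_num),
      show α - 1 = -(1 - α) by ring, rpow_neg hu.le, sub_add_cancel, rpow_one, div_eq_mul_inv]
  rw [hsplit]
  gcongr
  rwa [div_le_iff₀ hu]

lemma hasDerivAt_log_rpow_add_sub_mul_log {α C t u : ℝ} (hu : 0 < u) (hC : u ^ α + C ≠ 0)
    (ht : u + t ≠ 0) :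
    HasDerivAt (fun x ↦ log (x ^ α + C) - α * log (x + t))
      (α * u ^ (α - 1) / (u ^ α + C) - α / (u + t)) u := by
  have hpow : HasDerivAt (fun x ↦ x ^ α + C) (α * u ^ (α - 1)) u :=
    (hasDerivAt_rpow_const (Or.inl hu.ne')).add_const C
  have hlin : HasDerivAt (fun x ↦ x + t) 1 u := (hasDerivAt_id u).add_const t
  simpa [div_eq_mul_inv] using (hpow.log hC).fun_sub ((hlin.log ht).const_mul α)

lemma rpow_add_pos_of_mul_rpow_sub_one_le {α C t u : ℝ} (hu : 0 < u) (ht : 0 ≤ t)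
    (hC : t * u ^ (α - 1) ≤ C) : 0 < u ^ α + C := by
  have := mul_nonneg ht (rpow_nonneg hu.le (α - 1))
  have := rpow_pos_of_pos hu α
  linarith

lemma rpow_sub_one_div_sub_div_nonpos {α C t u : ℝ} (hα : 0 ≤ α) (hu : 0 < u) (ht : 0 ≤ t)
    (hC : t * u ^ (α - 1) ≤ C) :
    α * u ^ (α - 1) / (u ^ α + C) - α / (u + t) ≤ 0 := by
  have hut : 0 < u + t := by linarith
  have hden := rpow_add_pos_of_mul_rpow_sub_one_le hu ht hC
  have hkey : u ^ (α - 1) * (u + t) ≤ u ^ α + C := by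
    rw [mul_add, ← rpow_add_one hu.ne', sub_add_cancel, mul_comm]
    linarith
  rw [sub_nonpos, mul_div_assoc, ← mul_one_div α (u + t)]
  refine mul_le_mul_of_nonneg_left ?_ hα
  rwa [div_le_div_iff₀ hden hut, one_mul]

lemma antitoneOn_log_rpow_add_sub_mul_log {α C t : ℝ} {s : Set ℝ} (hα : 0 ≤ α) (ht : 0 ≤ t)
    (hs : Convex ℝ s) (hs_pos : s ⊆ Ioi 0) (hC : ∀ u ∈ s, t * u ^ (α - 1) ≤ C) :
    AntitoneOn (fun u ↦ log (u ^ α + C) - α * log (u + t)) s := by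
  have hderiv : ∀ u ∈ s, HasDerivAt (fun x ↦ log (x ^ α + C) - α * log (x + t))
      (α * u ^ (α - 1) / (u ^ α + C) - α / (u + t)) u := by
    intro u hu
    have hu0 : 0 < u := hs_pos hu
    exact hasDerivAt_log_rpow_add_sub_mul_log hu0
      (rpow_add_pos_of_mul_rpow_sub_one_le hu0 ht (hC u hu)).ne' (by linarith)
  exact antitoneOn_of_hasDerivWithinAt_nonpos hs
    (fun u hu ↦ (hderiv u hu).continuousAt.continuousWithinAt)
    (fun u hu ↦ (hderiv u (interior_subset hu)).hasDerivWithinAt)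
    (fun u hu ↦ rpow_sub_one_div_sub_div_nonpos hα (hs_pos (interior_subset hu)) ht
      (hC u (interior_subset hu)))

theorem f_monotone_decreasing
    (α : ℝ) (hα : α ∈ Set.Ico (0 : ℝ) 1)
    (m : ℕ) (hm : 2 ≤ m)
    (t : ℝ) (ht : t ∈ Set.Ioc (0 : ℝ) (1 - 1 / (m : ℝ)))
    (u₁ u₂ : ℝ) (h1 : 1 - t ≤ u₁) (h12 : u₁ ≤ u₂) :
    Real.logb 2 (u₂ ^ α + ((m : ℝ) - 1) ^ (1 - α) * t ^ α) - α * Real.logb 2 (u₂ + t) ≤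
      Real.logb 2 (u₁ ^ α + ((m : ℝ) - 1) ^ (1 - α) * t ^ α) - α * Real.logb 2 (u₁ + t) := by
  obtain ⟨hα0, hα1⟩ := hα
  obtain ⟨ht0, htm⟩ := ht
  have hm0 : (0 : ℝ) < m := Nat.cast_pos.mpr (by omega)
  have htm_mul : t * m ≤ m - 1 := by
    have := mul_le_mul_of_nonneg_right htm hm0.le
    rwa [sub_mul, one_mul, one_div_mul_cancel hm0.ne'] at this
  have ht1 : t < 1 := by nlinarith
  have hC : ∀ u ∈ Ici (1 - t), t * u ^ (α - 1) ≤ ((m : ℝ) - 1) ^ (1 - α) * t ^ α :=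
    fun u hu ↦ by
      have hu : 1 - t ≤ u := hu
      exact mul_rpow_sub_one_le hα1.le ht0.le (by linarith) (by nlinarith)
  have hanti := antitoneOn_log_rpow_add_sub_mul_log hα0 ht0.le (convex_Ici (1 - t))
    (fun u hu ↦ mem_Ioi.mpr (by linarith [mem_Ici.mp hu])) hC h1 (h1.trans h12) h12
  simp only [logb, ← mul_div_assoc, ← sub_div]
  exact div_le_div_of_nonneg_right hanti (log_nonneg one_le_two)
end

section
/- Let α ∈ [0,1) and let m ≥ 2 be an integer. Then the function g(u) := (1 − u)^α + (m−1)^{1−α} · u^α is nondecreasing on the interval (0, 1 − 1/m]; that is, for all 0 < u₁ ≤ u₂ ≤ 1 − 1/m one has g(u₁) ≤ g(u₂). -/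
/-!
With `c = k ^ (1 - α)`, the derivative of `(1 - u) ^ α + c * u ^ α` on `(0, 1)` is
`α * (c * u ^ (α - 1) - (1 - u) ^ (α - 1))`. Since `1 - α ≥ 0`, comparing the two terms
amounts to comparing `(1 - u)⁻¹` with `k / u`, i.e. `u` with `k * (1 - u)`, which holds
up to `u = k / (k + 1)`. For `k = m - 1` this endpoint is `1 - 1 / m`.
-/

open Set

namespace Real

theorem one_sub_rpow_sub_one_le_mul_rpow_sub_one {α k x : ℝ} (hα : α ≤ 1)
    (hx0 : 0 < x) (hx1 : x < 1) (hxk : x ≤ k * (1 - x)) :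
    (1 - x) ^ (α - 1) ≤ k ^ (1 - α) * x ^ (α - 1) := by
  have hk : 0 ≤ k := nonneg_of_mul_nonneg_left (hx0.le.trans hxk) (by linarith)
  have hinv : (1 - x)⁻¹ ≤ k / x := by
    rw [inv_eq_one_div, div_le_div_iff₀ (by linarith) hx0]
    linarith
  have hneg : α - 1 = -(1 - α) := by ring
  calc (1 - x) ^ (α - 1) = (1 - x)⁻¹ ^ (1 - α) := by
        rw [hneg, rpow_neg (by linarith), inv_rpow (by linarith)]
    _ ≤ (k / x) ^ (1 - α) :=
        rpow_le_rpow (inv_nonneg.2 (by linarith)) hinv (by linarith)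
    _ = k ^ (1 - α) * x ^ (α - 1) := by
        rw [div_rpow hk hx0.le, hneg, rpow_neg hx0.le, div_eq_mul_inv]

theorem hasDerivAt_one_sub_rpow_add_mul_rpow (α c : ℝ) {x : ℝ} (hx0 : 0 < x) (hx1 : x < 1) :
    HasDerivAt (fun u : ℝ => (1 - u) ^ α + c * u ^ α)
      (α * (c * x ^ (α - 1) - (1 - x) ^ (α - 1))) x := by
  have hleft : HasDerivAt (fun u : ℝ => (1 - u) ^ α) (α * (1 - x) ^ (α - 1) * -1) x :=
    (hasDerivAt_rpow_const (Or.inl (sub_pos.2 hx1).ne')).comp x ((hasDerivAt_id x).const_sub 1)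
  have hright : HasDerivAt (fun u : ℝ => c * u ^ α) (c * (α * x ^ (α - 1))) x :=
    (hasDerivAt_rpow_const (Or.inl hx0.ne')).const_mul c
  exact (hleft.add hright).congr_deriv (by ring)

theorem monotoneOn_one_sub_rpow_add_mul_rpow {α k : ℝ} (hα0 : 0 ≤ α) (hα1 : α ≤ 1)
    (hk : 0 ≤ k) :
    MonotoneOn (fun u : ℝ => (1 - u) ^ α + k ^ (1 - α) * u ^ α) (Icc 0 (k / (k + 1))) := by
  have hbound : ∀ x ∈ Ioo 0 (k / (k + 1)), x < 1 ∧ x ≤ k * (1 - x) := by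
    rintro x ⟨-, hx⟩
    rw [lt_div_iff₀ (by linarith)] at hx
    constructor <;> nlinarith
  refine monotoneOn_of_hasDerivWithinAt_nonneg (convex_Icc _ _)
    (f' := fun x => α * (k ^ (1 - α) * x ^ (α - 1) - (1 - x) ^ (α - 1))) ?_ (fun x hx => ?_)
    (fun x hx => ?_)
  · exact Continuous.continuousOn (by fun_prop (disch := exact hα0))
  · rw [interior_Icc] at hx
    exact (hasDerivAt_one_sub_rpow_add_mul_rpow α _ hx.1 (hbound x hx).1).hasDerivWithinAt
  · rw [interior_Icc] at hx
    obtain ⟨hx1, hxk⟩ := hbound x hx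
    exact mul_nonneg hα0
      (sub_nonneg.2 (one_sub_rpow_sub_one_le_mul_rpow_sub_one hα1 hx.1 hx1 hxk))

end Real

theorem g_monotone_increasing
    (α : ℝ) (hα : α ∈ Set.Ico (0 : ℝ) 1)
    (m : ℕ) (hm : 2 ≤ m)
    (u₁ u₂ : ℝ) (h0 : 0 < u₁) (h12 : u₁ ≤ u₂) (h2 : u₂ ≤ 1 - 1 / (m : ℝ)) :
    (1 - u₁) ^ α + ((m : ℝ) - 1) ^ (1 - α) * u₁ ^ α ≤
      (1 - u₂) ^ α + ((m : ℝ) - 1) ^ (1 - α) * u₂ ^ α := by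
  have hm1 : (1 : ℝ) ≤ m - 1 := by
    have : (2 : ℝ) ≤ m := by exact_mod_cast hm
    linarith
  have hend : ((m : ℝ) - 1) / ((m : ℝ) - 1 + 1) = 1 - 1 / (m : ℝ) := by
    have : (m : ℝ) ≠ 0 := by positivity
    field_simp
    ring
  have hmono :=
    Real.monotoneOn_one_sub_rpow_add_mul_rpow hα.1 hα.2.le (by linarith : (0 : ℝ) ≤ m - 1)
  rw [hend] at hmono
  exact hmono ⟨h0.le, h12.trans h2⟩ ⟨h0.le.trans h12, h2⟩ h12
end
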